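/- arXiv:2408.06549 — 4 statements merged into one kernel-verified Lean document; each statement's English description precedes it below -/
import Mathlib

section
/- Let H = (Fin M → V) where V is a real inner product space, with ‖Θ‖² = Σ_{m} ‖Θ m‖². Let f : H → ℝ be differentiable, let η > 0, and suppose (Assumption 1) for all m, Θ, Θ': ‖∇_m f(Θ) − ∇_m f(Θ')‖ ≤ L‖Θ − Θ'‖ and (Assumption 2) for all m, Θ: ‖∇_m f(Θ)‖ ≤ δ. Fix subsets C_1, …, C_E ⊆ Fin M and define two sequences of iterates from a common initial point Θ⁰: the masked iterates Θ^e with (Θ^e) m = (Θ^{e−1}) m − η·(∇_m f(Θ^{e−1}) if m ∈ C_e, else 0), and the full iterates Θ̂^e = Θ̂^{e−1} − η·∇f(Θ̂^{e−1}) with Θ̂⁰ = Θ⁰. Then ‖Θ^E − Θ̂^E‖² ≤ 2η² Σ_{e=1}^{E} ( ∏_{j=e+1}^{E} (2 + 2η²L²·|C_j|) ) · (M − |C_e|) · δ². -/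
/-- `PiLp` of complete spaces is complete (the uniformity is definitionally the
product uniformity). -/
instance PiLp.instCompleteSpace' {ι : Type*} [Fintype ι] {V : ι → Type*}
    [∀ i, NormedAddCommGroup (V i)] [∀ i, CompleteSpace (V i)] {p : ENNReal}
    [Fact (1 ≤ p)] : CompleteSpace (PiLp p V) :=
  inferInstance

lemma aux_sq_add {V : Type*} [SeminormedAddGroup V] (a b : V) :
    ‖a + b‖ ^ 2 ≤ 2 * ‖a‖ ^ 2 + 2 * ‖b‖ ^ 2 := by
  have h2 : ‖a + b‖ ^ 2 ≤ (‖a‖ + ‖b‖) ^ 2 := pow_le_pow_left₀ (norm_nonneg _) (norm_add_le a b) 2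
  nlinarith [sq_nonneg (‖a‖ - ‖b‖)]

lemma aux_apply_le {V : Type*} [NormedAddCommGroup V] [InnerProductSpace ℝ V]
    {M : ℕ} (x : PiLp 2 (fun _ : Fin M => V)) (m : Fin M) : ‖x m‖ ≤ ‖x‖ := by
  have h1 : ‖x‖ ^ 2 = ∑ i, ‖x i‖ ^ 2 := PiLp.norm_sq_eq_of_L2 _ x
  have h2 : ‖x m‖ ^ 2 ≤ ∑ i, ‖x i‖ ^ 2 :=
    Finset.single_le_sum (fun i _ => sq_nonneg ‖x i‖) (Finset.mem_univ m)
  nlinarith [norm_nonneg (x m), norm_nonneg x]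


lemma step_bound {V : Type*} [NormedAddCommGroup V] [InnerProductSpace ℝ V]
    [CompleteSpace V] {M : ℕ} (L δ η : ℝ)
    (f : PiLp 2 (fun _ : Fin M => V) → ℝ)
    (hL : ∀ (m : Fin M) (Θ Θ' : PiLp 2 (fun _ : Fin M => V)),
      ‖gradient f Θ m - gradient f Θ' m‖ ≤ L * ‖Θ - Θ'‖)
    (hδ : ∀ (m : Fin M) (Θ : PiLp 2 (fun _ : Fin M => V)),
      ‖gradient f Θ m‖ ≤ δ)
    (Cs : Finset (Fin M)) (A B A' B' : PiLp 2 (fun _ : Fin M => V))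
    (hmask : ∀ m, A' m = A m - η • (if m ∈ Cs then gradient f A m else 0))
    (hfull : B' = B - η • gradient f B) :
    ‖A' - B'‖ ^ 2 ≤ (2 + 2 * η ^ 2 * L ^ 2 * (Cs.card : ℝ)) * ‖A - B‖ ^ 2
      + 2 * η ^ 2 * ((M : ℝ) - (Cs.card : ℝ)) * δ ^ 2 := by
  have hB' : ∀ m, B' m = B m - η • gradient f B m := by
    intro m; rw [hfull]; rfl
  have key : ∀ m, ‖(A' - B') m‖ ^ 2 ≤ 2 * ‖(A - B) m‖ ^ 2 +
      2 * η ^ 2 * (if m ∈ Cs then L ^ 2 * ‖A - B‖ ^ 2 else δ ^ 2) := by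
    intro m
    have hsub : (A' - B') m = A' m - B' m := rfl
    have hsub2 : (A - B) m = A m - B m := rfl
    by_cases h : m ∈ Cs
    · have hx : (A' - B') m = (A m - B m) + (-η) • (gradient f A m - gradient f B m) := by
        rw [hsub, hmask m, hB' m, if_pos h]
        module
      rw [hx, if_pos h]
      have h1 := aux_sq_add (A m - B m) ((-η) • (gradient f A m - gradient f B m))
      have h2 : ‖gradient f A m - gradient f B m‖ ≤ L * ‖A - B‖ := hL m A B
      have h3 : ‖(-η) • (gradient f A m - gradient f B m)‖
          = |η| * ‖gradient f A m - gradient f B m‖ := by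
        rw [norm_smul]; simp
      have h4 : (|η|) ^ 2 = η ^ 2 := sq_abs η
      have h5 : (0:ℝ) ≤ ‖gradient f A m - gradient f B m‖ := norm_nonneg _
      have h6 : ‖(-η) • (gradient f A m - gradient f B m)‖ ^ 2
          = η ^ 2 * ‖gradient f A m - gradient f B m‖ ^ 2 := by
        rw [h3, mul_pow, sq_abs]
      have h7 : ‖gradient f A m - gradient f B m‖ ^ 2 ≤ (L * ‖A - B‖) ^ 2 := by
        nlinarith [mul_le_mul h2 h2 h5 (h5.trans h2)]
      rw [hsub2]
      nlinarith [sq_nonneg η]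
    · have hx : (A' - B') m = (A m - B m) + η • gradient f B m := by
        rw [hsub, hmask m, hB' m, if_neg h]
        module
      rw [hx, if_neg h]
      have h1 := aux_sq_add (A m - B m) (η • gradient f B m)
      have h2 : ‖gradient f B m‖ ≤ δ := hδ m B
      have h3 : ‖η • gradient f B m‖ = |η| * ‖gradient f B m‖ := by
        rw [norm_smul]; rfl
      have h4 : (0:ℝ) ≤ ‖gradient f B m‖ := norm_nonneg _
      have h6 : ‖η • gradient f B m‖ ^ 2 = η ^ 2 * ‖gradient f B m‖ ^ 2 := by
        rw [h3, mul_pow, sq_abs]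
      have h7 : ‖gradient f B m‖ ^ 2 ≤ δ ^ 2 := by
        nlinarith [mul_le_mul h2 h2 h4 (h4.trans h2)]
      rw [hsub2]
      nlinarith [sq_nonneg η]
  have hsum : ∑ m : Fin M, (if m ∈ Cs then L ^ 2 * ‖A - B‖ ^ 2 else δ ^ 2)
      = (Cs.card : ℝ) * (L ^ 2 * ‖A - B‖ ^ 2) + ((M : ℝ) - (Cs.card : ℝ)) * δ ^ 2 := by
    rw [Finset.sum_ite, Finset.sum_const, Finset.sum_const]
    have hc1 : Finset.univ.filter (fun m => m ∈ Cs) = Cs := by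
      ext m; simp
    have hc2 : Finset.univ.filter (fun m => ¬ m ∈ Cs) = Csᶜ := by
      ext m; simp
    rw [hc1, hc2, Finset.card_compl, Fintype.card_fin]
    have hle : Cs.card ≤ M := by
      simpa [Fintype.card_fin] using Finset.card_le_univ Cs
    rw [nsmul_eq_mul, nsmul_eq_mul, Nat.cast_sub hle]
  calc ‖A' - B'‖ ^ 2 = ∑ m, ‖(A' - B') m‖ ^ 2 := PiLp.norm_sq_eq_of_L2 _ _
    _ ≤ ∑ m, (2 * ‖(A - B) m‖ ^ 2 +
        2 * η ^ 2 * (if m ∈ Cs then L ^ 2 * ‖A - B‖ ^ 2 else δ ^ 2)) :=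
      Finset.sum_le_sum (fun m _ => key m)
    _ = 2 * (∑ m, ‖(A - B) m‖ ^ 2) +
        2 * η ^ 2 * ∑ m, (if m ∈ Cs then L ^ 2 * ‖A - B‖ ^ 2 else δ ^ 2) := by
      rw [Finset.sum_add_distrib, Finset.mul_sum, Finset.mul_sum]
    _ = (2 + 2 * η ^ 2 * L ^ 2 * (Cs.card : ℝ)) * ‖A - B‖ ^ 2
        + 2 * η ^ 2 * ((M : ℝ) - (Cs.card : ℝ)) * δ ^ 2 := by
      rw [hsum, ← PiLp.norm_sq_eq_of_L2]
      ring

/-- **Theorem 1 (per-client form)**: starting from a common initial point, after `E` local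
updates where at step `e` only the modality blocks in the combination `C e` are trained
(while the ideal iterate trains all `M` blocks with a full-gradient step), the squared
deviation between the masked iterate and the full iterate satisfies
`‖Θ^E − Θ̂^E‖² ≤ 2η² Σ_{e=1}^{E} (Π_{j=e+1}^{E} (2 + 2η²L²|C_j|)) (M − |C_e|) δ²`. -/
theorem theorem1_per_client
    {V : Type*} [NormedAddCommGroup V] [InnerProductSpace ℝ V] [CompleteSpace V]
    {M : ℕ} (L δ η : ℝ) (hη : 0 < η)
    (f : PiLp 2 (fun _ : Fin M => V) → ℝ)
    (hf : Differentiable ℝ f)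
    (hL : ∀ (m : Fin M) (Θ Θ' : PiLp 2 (fun _ : Fin M => V)),
      ‖gradient f Θ m - gradient f Θ' m‖ ≤ L * ‖Θ - Θ'‖)
    (hδ : ∀ (m : Fin M) (Θ : PiLp 2 (fun _ : Fin M => V)),
      ‖gradient f Θ m‖ ≤ δ)
    (E : ℕ) (C : ℕ → Finset (Fin M))
    (Θ Θhat : ℕ → PiLp 2 (fun _ : Fin M => V))
    (h0 : Θ 0 = Θhat 0)
    (hmask : ∀ e < E, ∀ m : Fin M,
      Θ (e + 1) m = Θ e m - η • (if m ∈ C (e + 1) then gradient f (Θ e) m else 0))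
    (hfull : ∀ e < E, Θhat (e + 1) = Θhat e - η • gradient f (Θhat e)) :
    ‖Θ E - Θhat E‖ ^ 2 ≤
      2 * η ^ 2 * ∑ e ∈ Finset.Icc 1 E,
        (∏ j ∈ Finset.Icc (e + 1) E, (2 + 2 * η ^ 2 * L ^ 2 * ((C j).card : ℝ)))
          * ((M : ℝ) - ((C e).card : ℝ)) * δ ^ 2 := by
  induction E with
  | zero =>
    have : Finset.Icc 1 0 = (∅ : Finset ℕ) := rfl
    simp [h0, this]
  | succ E ih =>
    have ihE := ih (fun e he m => hmask e (by omega) m) (fun e he => hfull e (by omega))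
    have hstep := step_bound L δ η f hL hδ (C (E + 1)) (Θ E) (Θhat E) (Θ (E + 1))
      (Θhat (E + 1)) (hmask E (by omega)) (hfull E (by omega))
    set Acoef : ℝ := 2 + 2 * η ^ 2 * L ^ 2 * ((C (E + 1)).card : ℝ) with hAdef
    have hA : 0 ≤ Acoef := by positivity
    have hrw : ∑ e ∈ Finset.Icc 1 (E + 1),
        (∏ j ∈ Finset.Icc (e + 1) (E + 1), (2 + 2 * η ^ 2 * L ^ 2 * ((C j).card : ℝ)))
          * ((M : ℝ) - ((C e).card : ℝ)) * δ ^ 2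
        = Acoef * (∑ e ∈ Finset.Icc 1 E,
            (∏ j ∈ Finset.Icc (e + 1) E, (2 + 2 * η ^ 2 * L ^ 2 * ((C j).card : ℝ)))
              * ((M : ℝ) - ((C e).card : ℝ)) * δ ^ 2)
          + ((M : ℝ) - ((C (E + 1)).card : ℝ)) * δ ^ 2 := by
      rw [Finset.sum_Icc_succ_top (by omega : 1 ≤ E + 1), Finset.mul_sum]
      congr 1
      · apply Finset.sum_congr rfl
        intro e he
        have he' : e + 1 ≤ E + 1 := by
          simp only [Finset.mem_Icc] at he; omega
        rw [Finset.prod_Icc_succ_top he']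
        ring
      · have : Finset.Icc (E + 1 + 1) (E + 1) = (∅ : Finset ℕ) :=
          Finset.Icc_eq_empty (by omega)
        rw [this, Finset.prod_empty, one_mul]
    rw [hrw]
    have hmul := mul_le_mul_of_nonneg_left ihE hA
    nlinarith [sq_nonneg η]
end

section
/- Let H = (Fin M → V) where V is a real inner product space, with ‖Θ‖² = Σ_{m} ‖Θ m‖². Let f_1, …, f_N : H → ℝ be differentiable, let η > 0, and suppose for every client n and every m, Θ, Θ': ‖∇_m f_n(Θ) − ∇_m f_n(Θ')‖ ≤ L‖Θ − Θ'‖ and ‖∇_m f_n(Θ)‖ ≤ δ. Fix subsets C_1, …, C_E ⊆ Fin M and a common initial point Θ^r. For each client n define masked iterates Θ_n^e with (Θ_n^e) m = (Θ_n^{e−1}) m − η·(∇_m f_n(Θ_n^{e−1}) if m ∈ C_e, else 0) and full iterates Θ̂_n^e = Θ̂_n^{e−1} − η·∇f_n(Θ̂_n^{e−1}), both started from Θ^r. Let Θ^{r+1} = (1/N) Σ_n Θ_n^E and Θ̂^{r+1} = (1/N) Σ_n Θ̂_n^E. Then ‖Θ^{r+1} − Θ̂^{r+1}‖² ≤ 2η²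 Σ_{e=1}^{E} ( ∏_{j=e+1}^{E} (2 + 2η²L²·|C_j|) ) · (M − |C_e|) · δ². -/
/-!
For each client the deviation `dₑ = Θₙᵉ - Θ̂ₙᵉ` satisfies the linear recursion
`‖dₑ‖² ≤ (2 + 2η²L²|Cₑ|) ‖dₑ₋₁‖² + 2η²(M - |Cₑ|) δ²`: on a trained block the two updates differ
by a difference of gradients, controlled by the Lipschitz bound, and on a frozen block by a
single gradient step, controlled by `δ`; on each block `‖a + b‖² ≤ 2‖a‖² + 2‖b‖²`. Unrolling the
recursion from `d₀ = 0` bounds every client's deviation, and averaging over the clients cannot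
increase it.
-/

open Finset

theorem norm_add_sq_le_two_mul {E : Type*} [SeminormedAddCommGroup E] (a b : E) :
    ‖a + b‖ ^ 2 ≤ 2 * (‖a‖ ^ 2 + ‖b‖ ^ 2) :=
  (pow_le_pow_left₀ (norm_nonneg _) (norm_add_le a b) 2).trans add_sq_le

theorem norm_add_smul_sq_le_two_mul {E : Type*} [SeminormedAddCommGroup E] [NormedSpace ℝ E]
    (a b : E) (η : ℝ) : ‖a + η • b‖ ^ 2 ≤ 2 * (‖a‖ ^ 2 + η ^ 2 * ‖b‖ ^ 2) := by
  simpa only [norm_smul, mul_pow, Real.norm_eq_abs, sq_abs] using norm_add_sq_le_two_mul a (η • b)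

theorem sum_univ_ite_mem_const {ι M : Type*} [Fintype ι] [DecidableEq ι] [CommRing M]
    (C : Finset ι) (a b : M) :
    ∑ m, (if m ∈ C then a else b) = #C * a + (Fintype.card ι - #C) * b := by
  rw [sum_ite, filter_mem_eq_of_subset (subset_univ C), filter_notMem_eq_sdiff, sum_const,
    sum_const, card_univ_sdiff, nsmul_eq_mul, nsmul_eq_mul, Nat.cast_sub (card_le_univ C)]

theorem norm_average_sq_le {ι E : Type*} [Fintype ι] [Nonempty ι] [SeminormedAddCommGroup E]
    [NormedSpace ℝ E] {x : ι → E} {R : ℝ} (h : ∀ i, ‖x i‖ ^ 2 ≤ R) :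
    ‖(Fintype.card ι : ℝ)⁻¹ • ∑ i, x i‖ ^ 2 ≤ R := by
  obtain ⟨i₀⟩ := ‹Nonempty ι›
  have hR : 0 ≤ R := (sq_nonneg _).trans (h i₀)
  have hx : ∀ i, ‖x i‖ ≤ √R := fun i => Real.le_sqrt_of_sq_le (h i)
  have havg : ‖(Fintype.card ι : ℝ)⁻¹ • ∑ i, x i‖ ≤ √R := by
    rw [norm_smul, norm_inv, Real.norm_natCast, inv_mul_le_iff₀ (by positivity)]
    simpa using norm_sum_le_of_le univ fun i _ => hx i
  calc _ ≤ √R ^ 2 := pow_le_pow_left₀ (norm_nonneg _) havg 2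
    _ = R := Real.sq_sqrt hR

theorem le_prod_mul_add_sum_of_succ_le_mul_add {u A B : ℕ → ℝ} (hA : ∀ j, 0 ≤ A j) {E : ℕ}
    (h : ∀ e < E, u (e + 1) ≤ A (e + 1) * u e + B (e + 1)) :
    u E ≤ (∏ j ∈ Icc 1 E, A j) * u 0 + ∑ e ∈ Icc 1 E, (∏ j ∈ Icc (e + 1) E, A j) * B e := by
  induction E with
  | zero => simp
  | succ k ih =>
    have hprod : ∀ i ≤ k + 1, ∏ j ∈ Icc i (k + 1), A j = (∏ j ∈ Icc i k, A j) * A (k + 1) :=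
      fun i hi => prod_Icc_succ_top hi A
    calc u (k + 1) ≤ A (k + 1) * u k + B (k + 1) := h k k.lt_add_one
      _ ≤ A (k + 1) * ((∏ j ∈ Icc 1 k, A j) * u 0
            + ∑ e ∈ Icc 1 k, (∏ j ∈ Icc (e + 1) k, A j) * B e) + B (k + 1) := by
          gcongr
          · exact hA _
          · exact ih fun e he => h e (he.trans k.lt_add_one)
      _ = _ := by
          have hsum : ∑ e ∈ Icc 1 k, (∏ j ∈ Icc (e + 1) (k + 1), A j) * B e
              = A (k + 1) * ∑ e ∈ Icc 1 k, (∏ j ∈ Icc (e + 1) k, A j) * B e := by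
            rw [mul_sum]
            refine sum_congr rfl fun e he => ?_
            rw [hprod (e + 1) (by simp at he; omega)]
            ring
          rw [sum_Icc_succ_top (by omega), hprod 1 (by omega), hsum,
            Icc_eq_empty_of_lt (k + 1).lt_add_one, prod_empty]
          ring

theorem norm_masked_step_sub_full_step_sq_le {ι W : Type*} [Fintype ι] [DecidableEq ι]
    [SeminormedAddCommGroup W] [NormedSpace ℝ W] (C : Finset ι) (η L δ : ℝ)
    {x y x' g g' : PiLp 2 (fun _ : ι => W)}
    (hL : ∀ m, ‖g m - g' m‖ ≤ L * ‖x - y‖) (hδ : ∀ m, ‖g' m‖ ≤ δ)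
    (hx' : ∀ m, x' m = x m - η • if m ∈ C then g m else 0) :
    ‖x' - (y - η • g')‖ ^ 2 ≤ (2 + 2 * η ^ 2 * L ^ 2 * #C) * ‖x - y‖ ^ 2
      + 2 * η ^ 2 * ((Fintype.card ι - #C) * δ ^ 2) := by
  have hblock : ∀ m, ‖(x' - (y - η • g')) m‖ ^ 2 ≤ 2 * ‖(x - y) m‖ ^ 2
      + if m ∈ C then 2 * η ^ 2 * (L ^ 2 * ‖x - y‖ ^ 2) else 2 * η ^ 2 * δ ^ 2 := by
    intro m
    simp only [PiLp.sub_apply, PiLp.smul_apply, hx']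
    split_ifs
    · have hgrad : ‖g' m - g m‖ ^ 2 ≤ L ^ 2 * ‖x - y‖ ^ 2 := by
        rw [norm_sub_rev, ← mul_pow]
        exact pow_le_pow_left₀ (norm_nonneg _) (hL m) 2
      calc _ = ‖(x m - y m) + η • (g' m - g m)‖ ^ 2 := by congr 2; module
        _ ≤ _ := norm_add_smul_sq_le_two_mul _ _ η
        _ ≤ _ := by linarith [mul_le_mul_of_nonneg_left hgrad (sq_nonneg η)]
    · have hgrad : ‖g' m‖ ^ 2 ≤ δ ^ 2 := pow_le_pow_left₀ (norm_nonneg _) (hδ m) 2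
      calc _ = ‖(x m - y m) + η • g' m‖ ^ 2 := by congr 2; module
        _ ≤ _ := norm_add_smul_sq_le_two_mul _ _ η
        _ ≤ _ := by linarith [mul_le_mul_of_nonneg_left hgrad (sq_nonneg η)]
  rw [PiLp.norm_sq_eq_of_L2 _ (x' - _)]
  calc _ ≤ _ := sum_le_sum fun m _ => hblock m
    _ = _ := by
      rw [sum_add_distrib, ← mul_sum, ← PiLp.norm_sq_eq_of_L2, sum_univ_ite_mem_const]
      ring

theorem theorem1_averaged_general
    {V : Type*} [NormedAddCommGroup V] [InnerProductSpace ℝ V] [CompleteSpace V]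
    {M N : ℕ} (hN : 0 < N) (L δ η : ℝ)
    (f : Fin N → PiLp 2 (fun _ : Fin M => V) → ℝ)
    (hL : ∀ (n : Fin N) (m : Fin M) (Θ Θ' : PiLp 2 (fun _ : Fin M => V)),
      ‖gradient (f n) Θ m - gradient (f n) Θ' m‖ ≤ L * ‖Θ - Θ'‖)
    (hδ : ∀ (n : Fin N) (m : Fin M) (Θ : PiLp 2 (fun _ : Fin M => V)),
      ‖gradient (f n) Θ m‖ ≤ δ)
    (E : ℕ) (C : ℕ → Finset (Fin M))
    (Θr : PiLp 2 (fun _ : Fin M => V))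
    (Θ Θhat : Fin N → ℕ → PiLp 2 (fun _ : Fin M => V))
    (h0 : ∀ n : Fin N, Θ n 0 = Θr)
    (hhat0 : ∀ n : Fin N, Θhat n 0 = Θr)
    (hmask : ∀ n : Fin N, ∀ e < E, ∀ m : Fin M,
      Θ n (e + 1) m =
        Θ n e m - η • (if m ∈ C (e + 1) then gradient (f n) (Θ n e) m else 0))
    (hfull : ∀ n : Fin N, ∀ e < E,
      Θhat n (e + 1) = Θhat n e - η • gradient (f n) (Θhat n e)) :
    ‖(N : ℝ)⁻¹ • ∑ n : Fin N, Θ n E - (N : ℝ)⁻¹ • ∑ n : Fin N, Θhat n E‖ ^ 2 ≤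
      2 * η ^ 2 * ∑ e ∈ Finset.Icc 1 E,
        (∏ j ∈ Finset.Icc (e + 1) E, (2 + 2 * η ^ 2 * L ^ 2 * ((C j).card : ℝ)))
          * ((M : ℝ) - ((C e).card : ℝ)) * δ ^ 2 := by
  have hclient : ∀ n, ‖Θ n E - Θhat n E‖ ^ 2 ≤ ∑ e ∈ Icc 1 E,
      (∏ j ∈ Icc (e + 1) E, (2 + 2 * η ^ 2 * L ^ 2 * (#(C j) : ℝ)))
        * (2 * η ^ 2 * ((M - #(C e)) * δ ^ 2)) := by
    intro n
    have hgronwall := le_prod_mul_add_sum_of_succ_le_mul_add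
      (u := fun e => ‖Θ n e - Θhat n e‖ ^ 2) (A := fun j => 2 + 2 * η ^ 2 * L ^ 2 * #(C j))
      (B := fun e => 2 * η ^ 2 * ((M - #(C e)) * δ ^ 2)) (fun j => by positivity) fun e he => by
        simpa only [hfull n e he, Fintype.card_fin] using
          norm_masked_step_sub_full_step_sq_le (C (e + 1)) η L δ (hL n · _ _) (hδ n · _)
            (hmask n e he)
    simpa [h0, hhat0] using hgronwall
  have : Nonempty (Fin N) := Fin.pos_iff_nonempty.mp hN
  rw [← smul_sub, ← sum_sub_distrib, mul_sum]
  simpa only [Fintype.card_fin, mul_assoc, mul_left_comm (2 * η ^ 2)] using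
    norm_average_sq_le hclient

/-- **Theorem 1 (averaged form)**: `N` clients run `E` local updates from a common global
model `Θʳ`; at step `e` each client trains only the modality blocks in the combination
`C e`, while the ideal iterates train all `M` blocks. The squared deviation between the
averaged masked model and the averaged full model satisfies
`‖Θ^{r+1} − Θ̂^{r+1}‖² ≤ 2η² Σ_{e=1}^{E} (Π_{j=e+1}^{E} (2 + 2η²L²|C_j|)) (M − |C_e|) δ²`. -/
theorem theorem1_averaged
    {V : Type*} [NormedAddCommGroup V] [InnerProductSpace ℝ V] [CompleteSpace V]
    {M N : ℕ} (hN : 0 < N) (L δ η : ℝ) (hη : 0 < η)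
    (f : Fin N → PiLp 2 (fun _ : Fin M => V) → ℝ)
    (hf : ∀ n : Fin N, Differentiable ℝ (f n))
    (hL : ∀ (n : Fin N) (m : Fin M) (Θ Θ' : PiLp 2 (fun _ : Fin M => V)),
      ‖gradient (f n) Θ m - gradient (f n) Θ' m‖ ≤ L * ‖Θ - Θ'‖)
    (hδ : ∀ (n : Fin N) (m : Fin M) (Θ : PiLp 2 (fun _ : Fin M => V)),
      ‖gradient (f n) Θ m‖ ≤ δ)
    (E : ℕ) (C : ℕ → Finset (Fin M))
    (Θr : PiLp 2 (fun _ : Fin M => V))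
    (Θ Θhat : Fin N → ℕ → PiLp 2 (fun _ : Fin M => V))
    (h0 : ∀ n : Fin N, Θ n 0 = Θr)
    (hhat0 : ∀ n : Fin N, Θhat n 0 = Θr)
    (hmask : ∀ n : Fin N, ∀ e < E, ∀ m : Fin M,
      Θ n (e + 1) m =
        Θ n e m - η • (if m ∈ C (e + 1) then gradient (f n) (Θ n e) m else 0))
    (hfull : ∀ n : Fin N, ∀ e < E,
      Θhat n (e + 1) = Θhat n e - η • gradient (f n) (Θhat n e)) :
    ‖(N : ℝ)⁻¹ • ∑ n : Fin N, Θ n E - (N : ℝ)⁻¹ • ∑ n : Fin N, Θhat n E‖ ^ 2 ≤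
      2 * η ^ 2 * ∑ e ∈ Finset.Icc 1 E,
        (∏ j ∈ Finset.Icc (e + 1) E, (2 + 2 * η ^ 2 * L ^ 2 * ((C j).card : ℝ)))
          * ((M : ℝ) - ((C e).card : ℝ)) * δ ^ 2 :=
  theorem1_averaged_general hN L δ η f hL hδ E C Θr Θ Θhat h0 hhat0 hmask hfull
end

section
/- Let H = (Fin M → V) where V is a real inner product space, with ‖Θ‖² = Σ_{m} ‖Θ m‖². Let f : H → ℝ be differentiable, η > 0, and suppose for all m, Θ, Θ': ‖∇_m f(Θ) − ∇_m f(Θ')‖ ≤ L‖Θ − Θ'‖ and ‖∇_m f(Θ)‖ ≤ δ. Then for any x, y ∈ H and any C ⊆ Fin M, letting x⁺ be the masked update of x ((x⁺) m = x m − η·(∇_m f(x) if m ∈ C, else 0)) and y⁺ = y − η·∇f(y) the full update of y, we have ‖x⁺ − y⁺‖² ≤ (2 + 2η²L²·|C|)·‖x − y‖² + 2η²·(M − |C|)·δ². -/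
/-!
On a block `m ∈ C` both models take a gradient step, so the blocks of `x⁺ - y⁺` differ from
those of `x - y` by `η` times a difference of gradients, bounded by `L‖x - y‖`; on a block
`m ∉ C` only `y` moves, by `η` times a gradient, bounded by `δ`. The inequality
`‖u - v‖² ≤ 2‖u‖² + 2‖v‖²` on each block, summed over the blocks, gives the claim.
-/

open Finset

theorem Finset.sum_ite_mem_univ_const {ι R : Type*} [Fintype ι] [DecidableEq ι] [Ring R]
    (s : Finset ι) (a b : R) :
    ∑ i, (if i ∈ s then a else b) = #s * a + ((Fintype.card ι : R) - #s) * b := by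
  rw [sum_ite, sum_const, sum_const, filter_mem_eq_inter, univ_inter, filter_not,
    filter_mem_eq_inter, univ_inter, card_univ_sdiff]
  simp [nsmul_eq_mul, Nat.cast_sub (card_le_univ s)]

theorem norm_sub_smul_sq_le {V : Type*} [SeminormedAddCommGroup V] [NormedSpace ℝ V]
    (u v : V) {η B : ℝ} (hv : ‖v‖ ≤ B) :
    ‖u - η • v‖ ^ 2 ≤ 2 * ‖u‖ ^ 2 + 2 * η ^ 2 * B ^ 2 := by
  have hsmul : ‖η • v‖ ^ 2 ≤ η ^ 2 * B ^ 2 := by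
    rw [norm_smul, mul_pow, Real.norm_eq_abs, sq_abs]
    gcongr
  calc ‖u - η • v‖ ^ 2 ≤ (‖u‖ + ‖η • v‖) ^ 2 := by gcongr; exact norm_sub_le _ _
    _ ≤ 2 * (‖u‖ ^ 2 + ‖η • v‖ ^ 2) := add_sq_le
    _ ≤ 2 * ‖u‖ ^ 2 + 2 * η ^ 2 * B ^ 2 := by linarith

theorem masked_step_sub_full_step_apply {ι V : Type*} [DecidableEq ι]
    [SeminormedAddCommGroup V] [Module ℝ V] (η : ℝ) (C : Finset ι) {x y g h xp yp : PiLp 2 (fun _ : ι => V)}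
    (hxp : ∀ m, xp m = x m - η • (if m ∈ C then g m else 0)) (hyp : yp = y - η • h) (m : ι) :
    (xp - yp) m = (x - y) m - η • (if m ∈ C then g m - h m else -h m) := by
  simp only [PiLp.sub_apply, hxp, hyp, PiLp.smul_apply]
  split_ifs <;> module

theorem theorem1_one_step_recursion_general
    {V : Type*} [NormedAddCommGroup V] [InnerProductSpace ℝ V] [CompleteSpace V]
    {M : ℕ} (L δ η : ℝ)
    (f : PiLp 2 (fun _ : Fin M => V) → ℝ)
    (hL : ∀ (m : Fin M) (Θ Θ' : PiLp 2 (fun _ : Fin M => V)),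
      ‖gradient f Θ m - gradient f Θ' m‖ ≤ L * ‖Θ - Θ'‖)
    (hδ : ∀ (m : Fin M) (Θ : PiLp 2 (fun _ : Fin M => V)),
      ‖gradient f Θ m‖ ≤ δ)
    (C : Finset (Fin M))
    (x y xp yp : PiLp 2 (fun _ : Fin M => V))
    (hxp : ∀ m : Fin M,
      xp m = x m - η • (if m ∈ C then gradient f x m else 0))
    (hyp : yp = y - η • gradient f y) :
    ‖xp - yp‖ ^ 2 ≤
      (2 + 2 * η ^ 2 * L ^ 2 * (C.card : ℝ)) * ‖x - y‖ ^ 2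
        + 2 * η ^ 2 * ((M : ℝ) - (C.card : ℝ)) * δ ^ 2 := by
  have hblock (m : Fin M) : ‖(xp - yp) m‖ ^ 2 ≤
      2 * ‖(x - y) m‖ ^ 2 + 2 * η ^ 2 * (if m ∈ C then (L * ‖x - y‖) ^ 2 else δ ^ 2) := by
    rw [masked_step_sub_full_step_apply η C hxp hyp m]
    split_ifs
    · exact norm_sub_smul_sq_le _ _ (hL m x y)
    · exact norm_sub_smul_sq_le _ _ ((norm_neg _).trans_le (hδ m y))
  calc ‖xp - yp‖ ^ 2 = ∑ m, ‖(xp - yp) m‖ ^ 2 := PiLp.norm_sq_eq_of_L2 _ _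
    _ ≤ ∑ m, (2 * ‖(x - y) m‖ ^ 2
          + 2 * η ^ 2 * (if m ∈ C then (L * ‖x - y‖) ^ 2 else δ ^ 2)) :=
      sum_le_sum fun m _ => hblock m
    _ = 2 * ‖x - y‖ ^ 2 + 2 * η ^ 2 * (#C * (L * ‖x - y‖) ^ 2 + ((M : ℝ) - #C) * δ ^ 2) := by
      rw [sum_add_distrib, ← mul_sum, ← mul_sum, ← PiLp.norm_sq_eq_of_L2,
        sum_ite_mem_univ_const, Fintype.card_fin]
    _ = (2 + 2 * η ^ 2 * L ^ 2 * (C.card : ℝ)) * ‖x - y‖ ^ 2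
          + 2 * η ^ 2 * ((M : ℝ) - (C.card : ℝ)) * δ ^ 2 := by ring

/-- **One-step recursion (Eq. (23)) of Theorem 1's proof**: if `x⁺` is the masked update
of `x` (only the modality blocks in `C` are trained) and `y⁺` the full-gradient update
of `y`, then
`‖x⁺ − y⁺‖² ≤ (2 + 2η²L²|C|)·‖x − y‖² + 2η²(M − |C|)δ²`. -/
theorem theorem1_one_step_recursion
    {V : Type*} [NormedAddCommGroup V] [InnerProductSpace ℝ V] [CompleteSpace V]
    {M : ℕ} (L δ η : ℝ) (hη : 0 < η)
    (f : PiLp 2 (fun _ : Fin M => V) → ℝ)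
    (hf : Differentiable ℝ f)
    (hL : ∀ (m : Fin M) (Θ Θ' : PiLp 2 (fun _ : Fin M => V)),
      ‖gradient f Θ m - gradient f Θ' m‖ ≤ L * ‖Θ - Θ'‖)
    (hδ : ∀ (m : Fin M) (Θ : PiLp 2 (fun _ : Fin M => V)),
      ‖gradient f Θ m‖ ≤ δ)
    (C : Finset (Fin M))
    (x y xp yp : PiLp 2 (fun _ : Fin M => V))
    (hxp : ∀ m : Fin M,
      xp m = x m - η • (if m ∈ C then gradient f x m else 0))
    (hyp : yp = y - η • gradient f y) :
    ‖xp - yp‖ ^ 2 ≤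
      (2 + 2 * η ^ 2 * L ^ 2 * (C.card : ℝ)) * ‖x - y‖ ^ 2
        + 2 * η ^ 2 * ((M : ℝ) - (C.card : ℝ)) * δ ^ 2 :=
  theorem1_one_step_recursion_general L δ η f hL hδ C x y xp yp hxp hyp
end

section
/- Fix real numbers a ≥ 0 and M ≥ 0, an integer E ≥ 1, and real numbers c_1, …, c_E with 0 ≤ c_e ≤ M for all e. Define B(c) = Σ_{e=1}^{E} (M − c_e) · ∏_{j=e+1}^{E} (2 + a·c_j). If c is sorted in descending order (c_1 ≥ c_2 ≥ … ≥ c_E), then for every permutation σ of {1, …, E} we have B(c) ≤ B(c ∘ σ); that is, arranging the values in descending order minimizes B over all rearrangements of the same multiset. -/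
/-!
Swapping two adjacent entries `x = c i < y = c (i+1)` of `c` changes only the terms `i` and
`i + 1` of `B`, and lowers `B` by `(y - x) (1 + a M) ∏_{k > i+1} (2 + a c_k) ≥ 0`. Bubble sort
reaches the descending arrangement from any rearrangement through such swaps, each of which
strictly decreases the number of ascending pairs, so `B` can only decrease along the way.
-/

/-- The right-hand side of Theorem 1's bound (up to the positive factor `2η²δ²`):
`B(c) = Σ_{e=1}^{E} (M − c_e) · Π_{j=e+1}^{E} (2 + a·c_j)`, for a cardinality
sequence `c` indexed by `Fin E`. -/
noncomputable def theoremOneBound (a M : ℝ) (E : ℕ) (c : Fin E → ℝ) : ℝ :=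
  ∑ e : Fin E, (M - c e) * ∏ j ∈ Finset.univ.filter (fun j : Fin E => e < j), (2 + a * c j)

open Finset Equiv

section LinearOrder

variable {ι : Type*} [LinearOrder ι]

theorem CovBy.swap_apply_lt_swap_apply {i j p q : ι} (hij : i ⋖ j) (hpq : p < q)
    (hne : (p, q) ≠ (i, j)) : swap i j p < swap i j q := by
  have := hij.lt
  have hp := fun h : p < j => hij.le_of_lt h
  have hq := fun h : i < q => hij.ge_of_gt h
  simp only [swap_apply_def, ne_eq, Prod.mk.injEq] at hne ⊢
  split_ifs <;> grind

theorem CovBy.lt_swap_apply_iff {i j e k : ι} (hij : i ⋖ j) (hei : e ≠ i) :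
    e < swap i j k ↔ e < k := by
  have := hij.lt
  have := fun h : e < j => hij.le_of_lt h
  simp only [swap_apply_def]
  split_ifs <;> grind

section LocallyFiniteOrderTop

variable [LocallyFiniteOrderTop ι]

theorem CovBy.Ioi_eq_insert {i j : ι} (hij : i ⋖ j) : Ioi i = insert j (Ioi j) := by
  rw [← coe_inj, coe_Ioi, coe_insert, coe_Ioi, hij.Ioi_eq, Set.Ioi_insert]

theorem CovBy.prod_Ioi_comp_swap {M : Type*} [CommMonoid M] {i j e : ι} (hij : i ⋖ j)
    (hei : e ≠ i) (g : ι → M) : ∏ k ∈ Ioi e, g (swap i j k) = ∏ k ∈ Ioi e, g k :=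
  prod_equiv (swap i j) (by simp [hij.lt_swap_apply_iff hei]) (fun _ _ => rfl)

end LocallyFiniteOrderTop

section Fintype

variable {α : Type*} [LinearOrder α] [Fintype ι]

def ascendingPairs (d : ι → α) : Finset (ι × ι) := {p | p.1 < p.2 ∧ d p.1 < d p.2}

theorem card_ascendingPairs_comp_swap_lt {d : ι → α} {i j : ι} (hij : i ⋖ j)
    (hd : d i < d j) : #(ascendingPairs (d ∘ swap i j)) < #(ascendingPairs d) := by
  classical
  let swapBoth : ι × ι → ι × ι := Prod.map (swap i j) (swap i j)
  have hinj : swapBoth.Injective := (swap i j).injective.prodMap (swap i j).injective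
  have hsub : (ascendingPairs (d ∘ swap i j)).image swapBoth ⊆
      (ascendingPairs d).erase (i, j) := by
    simp only [subset_iff, mem_image, mem_erase, ascendingPairs, mem_filter, mem_univ, true_and]
    rintro _ ⟨⟨p, q⟩, ⟨hpq, hdpq⟩, rfl⟩
    have hne : (p, q) ≠ (i, j) := by
      rintro ⟨⟩
      simp only [Function.comp_apply, swap_apply_left, swap_apply_right] at hdpq
      exact hdpq.not_gt hd
    refine ⟨fun h => ?_, hij.swap_apply_lt_swap_apply hpq hne, hdpq⟩
    simp only [swapBoth, Prod.map, Prod.mk.injEq, swap_apply_eq_iff, swap_apply_left,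
      swap_apply_right] at h
    exact (h.1 ▸ h.2 ▸ hpq).not_gt hij.lt
  calc #(ascendingPairs (d ∘ swap i j))
      = #((ascendingPairs (d ∘ swap i j)).image swapBoth) :=
        (card_image_of_injective _ hinj).symm
    _ ≤ #((ascendingPairs d).erase (i, j)) := card_le_card hsub
    _ < #(ascendingPairs d) := card_erase_lt_of_mem (by simp [ascendingPairs, hij.lt, hd])

end Fintype

end LinearOrder

theorem Antitone.le_comp_perm_of_forall_covBy {n : ℕ} {α β : Type*} [LinearOrder α]
    [Preorder β] {f : (Fin n → α) → β} {c : Fin n → α} (hc : Antitone c)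
    (hswap : ∀ (τ : Perm (Fin n)) (i j : Fin n), i ⋖ j → (c ∘ τ) i < (c ∘ τ) j →
      f ((c ∘ τ) ∘ swap i j) ≤ f (c ∘ τ))
    (σ : Perm (Fin n)) : f c ≤ f (c ∘ σ) := by
  induction hN : #(ascendingPairs (c ∘ σ)) using Nat.strong_induction_on generalizing σ with
  | _ N ih =>
    by_cases hσ : Antitone (c ∘ σ)
    · rw [Tuple.unique_antitone (σ := σ) (τ := 1) hσ hc]
      rfl
    obtain ⟨i, j, hij, hlt⟩ : ∃ i j, i ⋖ j ∧ (c ∘ σ) i < (c ∘ σ) j := by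
      simpa [antitone_iff_forall_covBy] using hσ
    calc f c ≤ f (c ∘ ⇑(σ * swap i j)) :=
          ih _ (hN ▸ card_ascendingPairs_comp_swap_lt hij hlt) _ rfl
      _ ≤ f (c ∘ σ) := hswap σ i j hij hlt

theorem theoremOneBound_sub_comp_swap (a M : ℝ) {E : ℕ} (c : Fin E → ℝ) {i j : Fin E}
    (hij : i ⋖ j) :
    theoremOneBound a M E c - theoremOneBound a M E (c ∘ swap i j) =
      (c j - c i) * (1 + a * M) * ∏ k ∈ Ioi j, (2 + a * c k) := by
  let term (d : Fin E → ℝ) (e : Fin E) := (M - d e) * ∏ k ∈ Ioi e, (2 + a * d k)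
  have hB (d : Fin E → ℝ) : theoremOneBound a M E d = ∑ e, term d e := by
    simp [theoremOneBound, term, filter_lt_eq_Ioi]
  have hterm (e : Fin E) (hei : e ≠ i) (hej : e ≠ j) :
      term c e - term (c ∘ swap i j) e = 0 := by
    simp only [term, Function.comp_apply, swap_apply_of_ne_of_ne hei hej,
      hij.prod_Ioi_comp_swap hei (fun k => 2 + a * c k), sub_self]
  have hPj : ∏ k ∈ Ioi j, (2 + a * c (swap i j k)) = ∏ k ∈ Ioi j, (2 + a * c k) :=
    hij.prod_Ioi_comp_swap hij.ne' (fun k => 2 + a * c k)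
  rw [hB, hB, ← sum_sub_distrib, Fintype.sum_eq_add i j hij.ne fun e he => hterm e he.1 he.2]
  simp only [term, hij.Ioi_eq_insert, prod_insert (notMem_Ioi_self (b := j)),
    Function.comp_apply, swap_apply_left, swap_apply_right, hPj]
  ring

theorem descending_order_minimizes_bound_general (a M : ℝ) (ha : 0 ≤ a) (hM : 0 ≤ M)
    (E : ℕ) (c : Fin E → ℝ)
    (hc : ∀ e : Fin E, 0 ≤ c e ∧ c e ≤ M)
    (hsorted : Antitone c)
    (σ : Equiv.Perm (Fin E)) :
    theoremOneBound a M E c ≤ theoremOneBound a M E (c ∘ σ) := by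
  refine hsorted.le_comp_perm_of_forall_covBy (fun τ i j hij hlt => ?_) σ
  have hfactor (k : Fin E) : 0 ≤ 2 + a * (c ∘ τ) k := by
    have := mul_nonneg ha (hc (τ k)).1
    positivity
  rw [← sub_nonneg, theoremOneBound_sub_comp_swap a M (c ∘ τ) hij]
  exact mul_nonneg (mul_nonneg (sub_pos.2 hlt).le (by positivity))
    (prod_nonneg fun k _ => hfactor k)

/-- **Corollary 1 (abstract form)**: if `c` is sorted in descending order, then for every
permutation `σ` of the indices, `B(c) ≤ B(c ∘ σ)`; i.e., arranging the cardinalities in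
descending order minimizes the Theorem 1 bound over all rearrangements. -/
theorem descending_order_minimizes_bound (a M : ℝ) (ha : 0 ≤ a) (hM : 0 ≤ M)
    (E : ℕ) (hE : 1 ≤ E) (c : Fin E → ℝ)
    (hc : ∀ e : Fin E, 0 ≤ c e ∧ c e ≤ M)
    (hsorted : Antitone c)
    (σ : Equiv.Perm (Fin E)) :
    theoremOneBound a M E c ≤ theoremOneBound a M E (c ∘ σ) :=
  descending_order_minimizes_bound_general a M ha hM E c hc hsorted σ
end
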